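/- arXiv:2210.14122 — 2 statements merged into one kernel-verified Lean document; each statement's English description precedes it below -/
import Mathlib

section
/- With Λ = R[x₀,…,x_n]/(Σx_i² − 1), F the free Λ-supermodule on s₀,…,s_n, and g(s_i) = Σ_j x̄_i x̄_j s_j, the image of g is a free Λ-supermodule of rank 1 generated by α = Σ_{j=0}^n x̄_j s_j; consequently P = ker g is a stably free super projective Λ-module, with P ⊕ Λα ≅ F. -/
/-!
Even elements of a supercommutative ring are central, so `g sᵢ = cᵢ α` with `α = ∑ⱼ cⱼ sⱼ`.
Then `g α = (∑ cⱼ²) α = α`, so `g` is an idempotent with image `Λα` and `F = ker g ⊕ Λα`. The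
annihilator of `α` vanishes because `a α = 0` forces every `a cⱼ = 0`, whence
`a = ∑ (a cⱼ) cⱼ = 0`.
-/

open MulOpposite

structure SuperRingStruct (R : Type) [Ring R] : Type where
  grade : ZMod 2 → AddSubgroup R
  isInternal : DirectSum.IsInternal grade
  one_mem : (1 : R) ∈ grade 0
  mul_mem : ∀ {i j : ZMod 2} {a b : R}, a ∈ grade i → b ∈ grade j → a * b ∈ grade (i + j)

def SuperRingStruct.IsSuperComm {R : Type} [Ring R] (S : SuperRingStruct R) : Prop :=
  ∀ {i j : ZMod 2} {a b : R}, a ∈ S.grade i → b ∈ S.grade j →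
    a * b = ((-1 : ℤ) ^ (i.val * j.val)) • (b * a)

structure SuperModule (R : Type) [Ring R] (S : SuperRingStruct R) : Type 1 where
  carrier : Type
  [acg : AddCommGroup carrier]
  [mod : Module Rᵐᵒᵖ carrier]
  grade : ZMod 2 → AddSubgroup carrier
  isInternal : DirectSum.IsInternal grade
  smul_mem : ∀ {i j : ZMod 2} {a : R} {x : carrier}, a ∈ S.grade i → x ∈ grade j →
    op a • x ∈ grade (i + j)

attribute [instance] SuperModule.acg SuperModule.mod

def SuperModule.IsFree {R : Type} [Ring R] {S : SuperRingStruct R} (F : SuperModule R S)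
    (I J : Type) : Prop :=
  ∃ b : Module.Basis (I ⊕ J) Rᵐᵒᵖ F.carrier,
    (∀ i, b (Sum.inl i) ∈ F.grade 0) ∧ (∀ j, b (Sum.inr j) ∈ F.grade 1)

def SuperModule.IsProjective {R : Type} [Ring R] {S : SuperRingStruct R}
    (P : SuperModule R S) : Prop :=
  ∃ (Q F : SuperModule R S) (I J : Type), F.IsFree I J ∧
    ∃ e : (P.carrier × Q.carrier) ≃ₗ[Rᵐᵒᵖ] F.carrier,
      ∀ (i : ZMod 2) (x : P.carrier) (y : Q.carrier),
        x ∈ P.grade i → y ∈ Q.grade i → e (x, y) ∈ F.grade i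

theorem SuperRingStruct.IsSuperComm.commute_of_mem_grade_zero {R : Type} [Ring R]
    {S : SuperRingStruct R} (hS : S.IsSuperComm) {i : ZMod 2} {a b : R}
    (ha : a ∈ S.grade 0) (hb : b ∈ S.grade i) : Commute a b := by
  show a * b = b * a
  simpa only [ZMod.val_zero, zero_mul, pow_zero, one_smul] using hS ha hb

section UnitVector

variable {ι A M : Type} [Fintype ι] [Ring A] [AddCommGroup M] [Module A M] {c : ι → A}

theorem eq_zero_of_smul_sum_smul_eq_zero {v : ι → M} (hv : LinearIndependent A v)
    (hsum : ∑ i, c i ^ 2 = 1) {a : A} (h : a • ∑ j, c j • v j = 0) : a = 0 := by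
  have hac : ∀ j, a * c j = 0 := by
    refine Fintype.linearIndependent_iff.mp hv (fun j => a * c j) ?_
    simpa only [Finset.smul_sum, smul_smul] using h
  calc a = a * ∑ i, c i ^ 2 := by rw [hsum, mul_one]
    _ = ∑ i, a * c i * c i := by simp only [Finset.mul_sum, pow_two, mul_assoc]
    _ = 0 := by simp only [hac, zero_mul, Finset.sum_const_zero]

theorem map_sum_smul_eq_self {v : ι → M} {g : M →ₗ[A] M} (hsum : ∑ i, c i ^ 2 = 1)
    (hg : ∀ i, g (v i) = c i • ∑ j, c j • v j) :
    g (∑ j, c j • v j) = ∑ j, c j • v j := by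
  simp only [map_sum, map_smul, hg, smul_smul, ← Finset.sum_smul, ← pow_two, hsum, one_smul]

theorem range_eq_span_sum_smul_basis (b : Module.Basis ι A M) {g : M →ₗ[A] M}
    (hsum : ∑ i, c i ^ 2 = 1) (hg : ∀ i, g (b i) = c i • ∑ j, c j • b j) :
    LinearMap.range g = Submodule.span A {∑ j, c j • b j} := by
  apply le_antisymm
  · rw [LinearMap.range_eq_map, ← b.span_eq, Submodule.map_span, Submodule.span_le]
    rintro _ ⟨_, ⟨i, rfl⟩, rfl⟩
    rw [hg]
    exact Submodule.smul_mem _ _ (Submodule.mem_span_singleton_self _)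
  · rw [Submodule.span_singleton_le_iff_mem]
    exact ⟨_, map_sum_smul_eq_self hsum hg⟩

end UnitVector

theorem bijective_ker_prod_smul {A M : Type} [Ring A] [AddCommGroup M] [Module A M]
    {g : M →ₗ[A] M} {α : M} (hgα : g α = α)
    (hrange : LinearMap.range g = Submodule.span A {α}) (hα : ∀ a : A, a • α = 0 → a = 0) :
    Function.Bijective (fun p : LinearMap.ker g × A => (p.1 : M) + p.2 • α) := by
  have hg_apply : ∀ p : LinearMap.ker g × A, g (p.1 + p.2 • α) = p.2 • α := by
    rintro ⟨⟨k, hk⟩, a⟩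
    rw [map_add, LinearMap.mem_ker.mp hk, map_smul, hgα, zero_add]
  constructor
  · intro p q h
    dsimp only at h
    have h2 : p.2 = q.2 :=
      sub_eq_zero.mp (hα _ (by rw [sub_smul, ← hg_apply p, ← hg_apply q, h, sub_self]))
    rw [h2] at h
    exact Prod.ext (Subtype.ext (add_right_cancel h)) h2
  · intro v
    obtain ⟨a, ha⟩ := Submodule.mem_span_singleton.mp (hrange ▸ LinearMap.mem_range_self g v)
    refine ⟨(⟨v - g v, ?_⟩, a), by simp only [ha, sub_add_cancel]⟩
    rw [LinearMap.mem_ker, map_sub, ← ha, map_smul, hgα, sub_self]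

theorem stmt_14_general {Λ : Type} [Ring Λ] (S : SuperRingStruct Λ) (hS : S.IsSuperComm)
    (n : ℕ) (c : Fin (n + 1) → Λ) (hc : ∀ i, c i ∈ S.grade 0)
    (hsum : ∑ i, (c i) ^ 2 = 1)
    (F : SuperModule Λ S) (b : Module.Basis (Fin (n + 1)) Λᵐᵒᵖ F.carrier)
    (g : F.carrier →ₗ[Λᵐᵒᵖ] F.carrier)
    (hg : ∀ i, g (b i) = ∑ j, op (c i * c j) • b j) :
    g (∑ j, op (c j) • b j) = ∑ j, op (c j) • b j ∧
    LinearMap.range g = Submodule.span Λᵐᵒᵖ {∑ j, op (c j) • b j} ∧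
    (∀ a : Λ, op a • (∑ j, op (c j) • b j) = 0 → a = 0) ∧
    Function.Bijective (fun p : ↥(LinearMap.ker g) × Λ =>
      (p.1 : F.carrier) + op p.2 • (∑ j, op (c j) • b j)) := by
  have hsum_op : ∑ i, op (c i) ^ 2 = 1 := by
    simpa only [Finset.op_sum, op_pow, op_one] using congrArg op hsum
  have hg_op : ∀ i, g (b i) = op (c i) • ∑ j, op (c j) • b j := fun i => by
    rw [hg, Finset.smul_sum]
    refine Finset.sum_congr rfl fun j _ => ?_
    rw [smul_smul, ← op_mul, (hS.commute_of_mem_grade_zero (hc i) (hc j)).eq]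
  have hgα := map_sum_smul_eq_self hsum_op hg_op
  have hrange := range_eq_span_sum_smul_basis b hsum_op hg_op
  have hann : ∀ a : Λᵐᵒᵖ, a • ∑ j, op (c j) • b j = 0 → a = 0 := fun _ =>
    eq_zero_of_smul_sum_smul_eq_zero b.linearIndependent hsum_op
  exact ⟨hgα, hrange, fun a h => op_injective (hann (op a) h),
    (bijective_ker_prod_smul hgα hrange hann).comp
      (Equiv.prodCongr (Equiv.refl _) opEquiv).bijective⟩

/-- With Λ, F, g as in the sphere construction, the image of g is free of rank 1 generated
by α = Σⱼ x̄ⱼ sⱼ (which has zero annihilator), and P = ker g is stably free: the map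
(k, a) ↦ k + α·a is a bijection (ker g) × Λ ≃ F, i.e. P ⊕ Λα ≅ F. -/
theorem stmt_14 {Λ : Type} [Ring Λ] (S : SuperRingStruct Λ) (hS : S.IsSuperComm)
    (n : ℕ) (c : Fin (n + 1) → Λ) (hc : ∀ i, c i ∈ S.grade 0)
    (hsum : ∑ i, (c i) ^ 2 = 1)
    (F : SuperModule Λ S) (b : Module.Basis (Fin (n + 1)) Λᵐᵒᵖ F.carrier)
    (hb : ∀ i, b i ∈ F.grade 0)
    (g : F.carrier →ₗ[Λᵐᵒᵖ] F.carrier)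
    (hg : ∀ i, g (b i) = ∑ j, op (c i * c j) • b j) :
    g (∑ j, op (c j) • b j) = ∑ j, op (c j) • b j ∧
    LinearMap.range g = Submodule.span Λᵐᵒᵖ {∑ j, op (c j) • b j} ∧
    (∀ a : Λ, op a • (∑ j, op (c j) • b j) = 0 → a = 0) ∧
    Function.Bijective (fun p : ↥(LinearMap.ker g) × Λ =>
      (p.1 : F.carrier) + op p.2 • (∑ j, op (c j) • b j)) :=
  stmt_14_general S hS n c hc hsum F b g hg
end

section
/- Let R_{S₀} be the even part of a finite Grassmann algebra over ℝ, and let (x, y) ∈ S^{1,0}, i.e., x² + y² = 1, with ε(x) > 0. Then y determines x: there is a unique x ∈ R_{S₀} with ε(x) > 0 and x² = 1 − y², given by Grassmann-analytically continuing √(1−t²); in particular the coordinate projection (x,y) ↦ y is a bijection from {(x,y) ∈ S^{1,0} : ε(x) > 0} onto {y ∈ R_{S₀} : −1 < ε(y) < 1}. -/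
/-- The body (coefficient at the empty multi-index) of a Grassmann number. -/
noncomputable def gBody {L : ℕ} (x : ExteriorAlgebra ℝ (Fin L → ℝ)) : ℝ :=
  ExteriorAlgebra.algebraMapInv x

/-- The soul (nilpotent part) of a Grassmann number. -/
noncomputable def gSoul {L : ℕ} (x : ExteriorAlgebra ℝ (Fin L → ℝ)) :
    ExteriorAlgebra ℝ (Fin L → ℝ) :=
  x - algebraMap ℝ _ (gBody x)

/-- Grassmann analytic continuation of a smooth function f : ℝ → ℝ: the Taylor expansion
of f around the body, evaluated at the nilpotent soul (which vanishes beyond degree L). -/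
noncomputable def gExtend {L : ℕ} (f : ℝ → ℝ) (x : ExteriorAlgebra ℝ (Fin L → ℝ)) :
    ExteriorAlgebra ℝ (Fin L → ℝ) :=
  ∑ k ∈ Finset.range (L + 1), ((deriv^[k] f) (gBody x) / k.factorial) • gSoul x ^ k

/-- The Grassmann sine. -/
noncomputable def gSin {L : ℕ} (x : ExteriorAlgebra ℝ (Fin L → ℝ)) :
    ExteriorAlgebra ℝ (Fin L → ℝ) := gExtend Real.sin x

/-- The Grassmann cosine. -/
noncomputable def gCos {L : ℕ} (x : ExteriorAlgebra ℝ (Fin L → ℝ)) :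
    ExteriorAlgebra ℝ (Fin L → ℝ) := gExtend Real.cos x

/-- The even part of the Grassmann algebra. -/
noncomputable def gEven (L : ℕ) : Submodule ℝ (ExteriorAlgebra ℝ (Fin L → ℝ)) :=
  CliffordAlgebra.evenOdd (0 : QuadraticForm ℝ (Fin L → ℝ)) 0

/-! The soul `x - ε(x)` of a Grassmann number lies in exterior degrees `≥ 1`, and degrees above
`L` vanish, so the soul is nilpotent. Hence every `a` with `ε(a) > 0` has a square root with
positive body: Newton's iteration for `X ^ 2 - a`, started at `√ε(a)`, converges in the
commutative subalgebra generated by `a` because the error `√ε(a) ^ 2 - a` is nilpotent. The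
square root lies in the even part since `a` does. Even elements are central, so two square
roots `x₁, x₂` with positive bodies satisfy `(x₁ + x₂)(x₁ - x₂) = 0`, where `x₁ + x₂` is a
unit since its body is nonzero; thus `x₁ = x₂`. On `S^{1,0}` this gives `x = √(1 - y²)`, and
the body equation `ε(x)² + ε(y)² = 1` with `ε(x) > 0` is the condition `-1 < ε(y) < 1`. -/

open ExteriorAlgebra

namespace ExteriorAlgebra

section Filtration

variable (R M : Type*) [CommRing R] [AddCommGroup M] [Module R M]

def degreeAtLeast (m : ℕ) : Submodule R (ExteriorAlgebra R M) :=
  ⨆ i : ℕ, ⋀[R]^(i + m) M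

variable {R M}

theorem exteriorPower_mul_exteriorPower (i j : ℕ) : ⋀[R]^i M * ⋀[R]^j M = ⋀[R]^(i + j) M :=
  (pow_add _ i j).symm

theorem exteriorPower_le_degreeAtLeast (m : ℕ) : ⋀[R]^m M ≤ degreeAtLeast R M m :=
  le_iSup_of_le 0 (by rw [zero_add])

theorem degreeAtLeast_succ_le (m : ℕ) : degreeAtLeast R M (m + 1) ≤ degreeAtLeast R M m :=
  iSup_le fun i => le_iSup_of_le (i + 1) (by rw [add_right_comm, add_assoc])

theorem degreeAtLeast_mul_le (m n : ℕ) :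
    degreeAtLeast R M m * degreeAtLeast R M n ≤ degreeAtLeast R M (m + n) := by
  refine (Submodule.iSup_mul _ _).trans_le (iSup_le fun i => ?_)
  refine (Submodule.mul_iSup _ _).trans_le (iSup_le fun j => ?_)
  rw [exteriorPower_mul_exteriorPower]
  exact le_iSup_of_le (i + j) (le_of_eq (by ring_nf))

theorem pow_mem_degreeAtLeast {x : ExteriorAlgebra R M} (hx : x ∈ degreeAtLeast R M 1)
    (k : ℕ) : x ^ k ∈ degreeAtLeast R M k := by
  induction k with
  | zero => exact exteriorPower_le_degreeAtLeast 0 (by simp [exteriorPower])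
  | succ k ih => exact degreeAtLeast_mul_le k 1 (pow_succ x k ▸ Submodule.mul_mem_mul ih hx)

theorem sub_algebraMap_algebraMapInv_mem (x : ExteriorAlgebra R M) :
    x - algebraMap R _ (algebraMapInv x) ∈ degreeAtLeast R M 1 := by
  induction x using ExteriorAlgebra.induction with
  | algebraMap r => simp
  | ι m =>
    simpa [algebraMapInv] using exteriorPower_le_degreeAtLeast 1 (by simp [exteriorPower])
  | add a b ha hb => simpa only [map_add, add_sub_add_comm] using add_mem ha hb
  | mul a b ha hb =>
    rw [map_mul, map_mul]
    generalize algebraMapInv a = a₀ at ha ⊢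
    generalize algebraMapInv b = b₀ at hb ⊢
    have key : a * b - algebraMap R _ a₀ * algebraMap R _ b₀ =
        (a - algebraMap R _ a₀) * (b - algebraMap R _ b₀) +
          a₀ • (b - algebraMap R _ b₀) + b₀ • (a - algebraMap R _ a₀) := by
      rw [Algebra.smul_def, Algebra.smul_def, Algebra.commutes b₀]
      noncomm_ring
    rw [key]
    have hab := degreeAtLeast_succ_le 1 <|
      degreeAtLeast_mul_le 1 1 (Submodule.mul_mem_mul ha hb)
    exact add_mem (add_mem hab (Submodule.smul_mem _ _ hb)) (Submodule.smul_mem _ _ ha)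

theorem degreeAtLeast_eq_bot {K V : Type*} [Field K] [AddCommGroup V] [Module K V]
    [FiniteDimensional K V] {n : ℕ} (hn : Module.finrank K V < n) :
    degreeAtLeast K V n = ⊥ := by
  have : ⋀[K]^n V = ⊥ := by
    rw [← Submodule.finrank_eq_zero, exteriorPower.finrank_eq, Nat.choose_eq_zero_of_lt hn]
  refine eq_bot_iff.mpr (iSup_le fun i => ?_)
  rw [add_comm, ← exteriorPower_mul_exteriorPower, this, Submodule.bot_mul]

theorem isNilpotent_sub_algebraMap_algebraMapInv {K V : Type*} [Field K] [AddCommGroup V]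
    [Module K V] [FiniteDimensional K V] (x : ExteriorAlgebra K V) :
    IsNilpotent (x - algebraMap K _ (algebraMapInv x)) := by
  refine ⟨Module.finrank K V + 1, ?_⟩
  simpa [degreeAtLeast_eq_bot (Nat.lt_succ_self _)] using
    pow_mem_degreeAtLeast (sub_algebraMap_algebraMapInv_mem x) (Module.finrank K V + 1)

end Filtration

section Even

variable {R M : Type*} [CommRing R] [AddCommGroup M] [Module R M]

theorem commute_ι_mul_ι (m₁ m₂ : M) (b : ExteriorAlgebra R M) :
    Commute (ι R m₁ * ι R m₂) b := by
  have anticomm (u v : M) : ι R u * ι R v = -(ι R v * ι R u) :=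
    eq_neg_of_add_eq_zero_left (ι_add_mul_swap u v)
  induction b using ExteriorAlgebra.induction with
  | algebraMap r => exact Algebra.commute_algebraMap_right r _
  | ι v =>
    change _ * _ = _ * _
    rw [mul_assoc, anticomm m₂, mul_neg, ← mul_assoc, anticomm m₁, neg_mul, neg_neg,
      mul_assoc]
  | mul a b ha hb => exact ha.mul_right hb
  | add a b ha hb => exact ha.add_right hb

theorem commute_of_mem_evenOdd_zero {x : ExteriorAlgebra R M}
    (hx : x ∈ CliffordAlgebra.evenOdd (0 : QuadraticForm R M) 0) (b : ExteriorAlgebra R M) :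
    Commute x b := by
  induction x, hx using CliffordAlgebra.even_induction with
  | algebraMap r => exact Algebra.commute_algebraMap_left r b
  | add a c _ _ ha hc => exact ha.add_left hc
  | ι_mul_ι_mul m₁ m₂ a _ ha => exact (commute_ι_mul_ι m₁ m₂ b).mul_left ha

end Even

end ExteriorAlgebra

theorem isUnit_of_augmentation_ne_zero {K A : Type*} [Field K] [Ring A] [Algebra K A]
    {ε : A →ₐ[K] K} (hε : ∀ x, IsNilpotent (x - algebraMap K A (ε x))) {x : A}
    (hx : ε x ≠ 0) : IsUnit x := by
  simpa using (hε x).isUnit_add_left_of_commute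
    ((isUnit_iff_ne_zero.mpr hx).map (algebraMap K A)) (Algebra.commutes _ _).symm

open Polynomial in
open scoped IsMulCommutative in
theorem exists_sq_eq_of_augmentation_pos {A : Type*} [Ring A] [Algebra ℝ A]
    {ε : A →ₐ[ℝ] ℝ} (hε : ∀ x, IsNilpotent (x - algebraMap ℝ A (ε x))) {a : A}
    (ha : 0 < ε a) : ∃ x ∈ Algebra.adjoin ℝ {a}, 0 < ε x ∧ x ^ 2 = a := by
  let S := Algebra.adjoin ℝ {a}
  let a' : S := ⟨a, Algebra.self_mem_adjoin_singleton ℝ a⟩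
  let x₀ : S := algebraMap ℝ S √(ε a)
  have hP : IsNilpotent (aeval x₀ (X ^ 2 - C a')) := by
    rw [← IsNilpotent.map_iff Subtype.val_injective (f := S.val), ← isNilpotent_neg_iff]
    simpa [x₀, a', ← map_pow, Real.sq_sqrt ha.le] using hε a
  have hP' : IsUnit (aeval x₀ (derivative (X ^ 2 - C a'))) := by
    have hu : IsUnit (2 * √(ε a)) := isUnit_iff_ne_zero.mpr (by positivity)
    simpa [x₀, one_add_one_eq_two, map_ofNat] using hu.map (algebraMap ℝ S)
  obtain ⟨r, ⟨hr, hr2⟩, -⟩ := existsUnique_nilpotent_sub_and_aeval_eq_zero hP hP'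
  refine ⟨r, r.2, ?_, ?_⟩
  · have hbody : √(ε a) - ε r = 0 := by simpa [x₀] using (hr.map (ε.comp S.val)).eq_zero
    rw [← sub_eq_zero.mp hbody]
    positivity
  · simpa [sub_eq_zero, a'] using congrArg S.val hr2

theorem eq_of_sq_eq_sq_of_commute {R : Type*} [Ring R] {x y : R} (hxy : Commute x y)
    (hu : IsUnit (x + y)) (h : x ^ 2 = y ^ 2) : x = y := by
  rw [← sub_eq_zero, ← hu.mul_right_eq_zero, ← hxy.sq_sub_sq, h, sub_self]

section Grassmann

variable {L : ℕ}

theorem mem_gEven_iff {x : ExteriorAlgebra ℝ (Fin L → ℝ)} :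
    x ∈ gEven L ↔ x ∈ CliffordAlgebra.even (0 : QuadraticForm ℝ (Fin L → ℝ)) := by
  rw [gEven, ← CliffordAlgebra.even_toSubmodule, Subalgebra.mem_toSubmodule]

theorem one_sub_sq_mem_gEven {y : ExteriorAlgebra ℝ (Fin L → ℝ)} (hy : y ∈ gEven L) :
    1 - y ^ 2 ∈ gEven L :=
  mem_gEven_iff.mpr (sub_mem (one_mem _) (pow_mem (mem_gEven_iff.mp hy) 2))

theorem gBody_one_sub_sq_pos {y : ExteriorAlgebra ℝ (Fin L → ℝ)} (h₁ : -1 < gBody y)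
    (h₂ : gBody y < 1) : 0 < gBody (1 - y ^ 2) := by
  have hbody : gBody (1 - y ^ 2) = 1 - gBody y ^ 2 := by
    simp only [gBody, map_sub, map_one, map_pow]
  rw [hbody]
  nlinarith

theorem eq_of_sq_eq_sq_of_mem_gEven {x y : ExteriorAlgebra ℝ (Fin L → ℝ)} (hx : x ∈ gEven L)
    (hxpos : 0 < gBody x) (hypos : 0 < gBody y) (h : x ^ 2 = y ^ 2) : x = y := by
  refine eq_of_sq_eq_sq_of_commute (commute_of_mem_evenOdd_zero hx y)
    (isUnit_of_augmentation_ne_zero isNilpotent_sub_algebraMap_algebraMapInv ?_) h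
  rw [map_add]
  exact (add_pos hxpos hypos).ne'

theorem existsUnique_sq_eq_of_mem_gEven {a : ExteriorAlgebra ℝ (Fin L → ℝ)}
    (ha : a ∈ gEven L) (hpos : 0 < gBody a) :
    ∃! x, x ∈ gEven L ∧ 0 < gBody x ∧ x ^ 2 = a := by
  obtain ⟨x, hxa, hxpos, rfl⟩ :=
    exists_sq_eq_of_augmentation_pos isNilpotent_sub_algebraMap_algebraMapInv hpos
  have hx : x ∈ gEven L :=
    mem_gEven_iff.mpr (Algebra.adjoin_le (Set.singleton_subset_iff.mpr (mem_gEven_iff.mp ha)) hxa)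
  exact ⟨x, ⟨hx, hxpos, rfl⟩,
    fun z ⟨hz, hzpos, hzx⟩ => eq_of_sq_eq_sq_of_mem_gEven hz hzpos hxpos hzx⟩

end Grassmann

/-- On the supercircle, the positive-body coordinate x is uniquely determined by y:
there is a unique even x with positive body and x² = 1 − y²; consequently the projection
(x, y) ↦ y is a bijection from {(x,y) ∈ S^{1,0} : ε(x) > 0} onto
{y even : −1 < ε(y) < 1}. -/
theorem stmt_17 (L : ℕ) :
    (∀ y : ExteriorAlgebra ℝ (Fin L → ℝ), y ∈ gEven L → -1 < gBody y → gBody y < 1 →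
      ∃! x : ExteriorAlgebra ℝ (Fin L → ℝ),
        x ∈ gEven L ∧ 0 < gBody x ∧ x ^ 2 = 1 - y ^ 2) ∧
    Set.BijOn (fun p : ExteriorAlgebra ℝ (Fin L → ℝ) × ExteriorAlgebra ℝ (Fin L → ℝ) => p.2)
      {p | p.1 ∈ gEven L ∧ p.2 ∈ gEven L ∧ p.1 ^ 2 + p.2 ^ 2 = 1 ∧ 0 < gBody p.1}
      {y | y ∈ gEven L ∧ -1 < gBody y ∧ gBody y < 1} := by
  have hsqrt (y : ExteriorAlgebra ℝ (Fin L → ℝ)) (hy : y ∈ gEven L) (h₁ : -1 < gBody y)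
      (h₂ : gBody y < 1) : ∃! x, x ∈ gEven L ∧ 0 < gBody x ∧ x ^ 2 = 1 - y ^ 2 :=
    existsUnique_sq_eq_of_mem_gEven (one_sub_sq_mem_gEven hy) (gBody_one_sub_sq_pos h₁ h₂)
  refine ⟨hsqrt, ?mapsTo, ?injOn, ?surjOn⟩
  case mapsTo =>
    rintro ⟨x, y⟩ ⟨-, hy, hxy, hxpos⟩
    have hbody : gBody x ^ 2 + gBody y ^ 2 = 1 := by
      simpa only [gBody, map_add, map_pow, map_one] using congrArg gBody hxy
    exact ⟨hy, by nlinarith, by nlinarith⟩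
  case injOn =>
    rintro ⟨x₁, y⟩ ⟨hx₁, -, h₁, hx₁pos⟩ ⟨x₂, _⟩ ⟨-, -, h₂, hx₂pos⟩ rfl
    refine Prod.ext (eq_of_sq_eq_sq_of_mem_gEven hx₁ hx₁pos hx₂pos ?_) rfl
    rw [eq_sub_of_add_eq h₁, eq_sub_of_add_eq h₂]
  case surjOn =>
    rintro y ⟨hy, h₁, h₂⟩
    obtain ⟨x, ⟨hx, hxpos, hx2⟩, -⟩ := hsqrt y hy h₁ h₂
    exact ⟨(x, y), ⟨hx, hy, by rw [hx2, sub_add_cancel], hxpos⟩, rfl⟩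
end
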